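/- Let G be a simple graph on a finite vertex set and let NM(G) = A·L be its neighbourhood matrix. If i and j are distinct vertices with NM(G)[i,j] = 0, then every walk in G from i to j has length at least 3 (in particular the distance between i and j, if they are connected, is at least 3). -/

import Mathlib

/-!
Since `L = D - A`, the entry `(A L)ᵢⱼ` equals `Aᵢⱼ deg j - #N(i) ∩ N(j)`. If `i ~ j`, then `i` is a
neighbour of `j` that is not a common neighbour, so the entry is positive. Hence the entry vanishes
exactly when `i` and `j` are non-adjacent without common neighbours, i.e. at distance at least 3.
-/

open SimpleGraph Matrix Finset

namespace SimpleGraph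

variable {V : Type*} [Fintype V] (G : SimpleGraph V) [DecidableRel G.Adj]

theorem adjMatrix_mul_self_apply {α : Type*} [NonAssocSemiring α] (v w : V) :
    (G.adjMatrix α * G.adjMatrix α) v w = Fintype.card (G.commonNeighbors v w) := by
  simp only [adjMatrix_mul_apply, adjMatrix_apply, sum_boole, ← Set.toFinset_card]
  congr 2
  ext u
  simp [mem_commonNeighbors, G.adj_comm w]

theorem adjMatrix_mul_lapMatrix_apply [DecidableEq V] {R : Type*} [NonAssocRing R] (v w : V) :
    (G.adjMatrix R * G.lapMatrix R) v w =
      (if G.Adj v w then (G.degree w : R) else 0) - Fintype.card (G.commonNeighbors v w) := by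
  rw [lapMatrix, degMatrix, Matrix.mul_sub, Matrix.sub_apply, mul_diagonal,
    adjMatrix_mul_self_apply, adjMatrix_apply, ite_mul, one_mul, zero_mul]

theorem adjMatrix_mul_lapMatrix_apply_eq_zero_iff [DecidableEq V] {R : Type*} [Ring R]
    [CharZero R] {v w : V} :
    (G.adjMatrix R * G.lapMatrix R) v w = 0 ↔ ¬G.Adj v w ∧ G.commonNeighbors v w = ∅ := by
  rw [adjMatrix_mul_lapMatrix_apply]
  by_cases hvw : G.Adj v w
  · have hlt := hvw.symm.card_commonNeighbors_lt_degree
    simp only [commonNeighbors_symm G w v] at hlt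
    rw [if_pos hvw, ← Nat.cast_sub hlt.le, Nat.cast_eq_zero]
    simp only [hvw, not_true_eq_false, false_and, iff_false]
    omega
  · rw [if_neg hvw, zero_sub, neg_eq_zero, Nat.cast_eq_zero, Fintype.card_eq_zero_iff,
      Set.isEmpty_coe_sort]
    exact (and_iff_right hvw).symm

end SimpleGraph

theorem nm_zero_entry_dist_ge_three {V : Type*} [Fintype V] [DecidableEq V]
    (G : SimpleGraph V) [DecidableRel G.Adj] (i j : V) (hne : i ≠ j)
    (h : (G.adjMatrix ℤ * G.lapMatrix ℤ) i j = 0) :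
    ∀ w : G.Walk i j, 3 ≤ w.length := by
  intro w
  have hdist : 2 < G.edist i j :=
    two_lt_edist_iff.mpr ⟨hne, G.adjMatrix_mul_lapMatrix_apply_eq_zero_iff.mp h⟩
  have hlen : (2 : ℕ∞) < w.length := hdist.trans_le w.edist_le
  exact_mod_cast Order.add_one_le_of_lt hlen
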